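/- Under the stated hypotheses, 0 is locally exponentially attracting: there exist δ > 0, C ≥ 1 and α ∈ (0,1) such that for every x with ‖x‖ < δ and every k ∈ ℕ, one has f⁽ᵏ⁾(x) ∈ Ω and ‖f⁽ᵏ⁾(x)‖ ≤ C·αᵏ·‖x‖. -/

import Mathlib

/-!
Fix `ρ < β < α < 1`. The series `N x = ∑ ‖A ^ k x‖ / β ^ k` converges to a norm
with `‖x‖ ≤ N x ≤ M ‖x‖`, and `N (A x) ≤ β N x`. Since `f = A + o(‖x‖)` at `0`, on a small
`N`-ball `f` contracts `N` by `α`, so that ball is invariant and `N (f^[k] x) ≤ α ^ k N x`.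
Shrinking the initial radius keeps all iterates inside a ball contained in `Ω`.
-/

namespace ContinuousLinearMap

variable {E : Type*} [NormedAddCommGroup E] [NormedSpace ℝ E] {A : E →L[ℝ] E} {c ρ β : ℝ}

noncomputable def adaptedNorm (A : E →L[ℝ] E) (β : ℝ) (x : E) : ℝ :=
  ∑' k : ℕ, ‖(A ^ k) x‖ / β ^ k

theorem adaptedNorm_nonneg (hβ : 0 ≤ β) (x : E) : 0 ≤ adaptedNorm A β x :=
  tsum_nonneg fun k => by positivity

section

variable (hAk : ∀ k : ℕ, ‖A ^ k‖ ≤ c * ρ ^ k) (hρ : 0 ≤ ρ) (hρβ : ρ < β)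
include hAk hρ hρβ

theorem norm_pow_apply_div_le (x : E) (k : ℕ) :
    ‖(A ^ k) x‖ / β ^ k ≤ c * ‖x‖ * (ρ / β) ^ k := by
  have hβ : 0 < β := hρ.trans_lt hρβ
  rw [div_le_iff₀ (by positivity), div_pow, mul_assoc,
    div_mul_cancel₀ _ (pow_ne_zero k hβ.ne'), mul_right_comm]
  exact (A ^ k).le_of_opNorm_le (hAk k) x

theorem summable_adaptedNorm (x : E) : Summable fun k : ℕ => ‖(A ^ k) x‖ / β ^ k := by
  have hβ : 0 < β := hρ.trans_lt hρβ
  refine .of_nonneg_of_le (fun k => by positivity) (norm_pow_apply_div_le hAk hρ hρβ x) ?_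
  exact (summable_geometric_of_lt_one (by positivity) ((div_lt_one hβ).2 hρβ)).mul_left _

theorem norm_le_adaptedNorm (x : E) : ‖x‖ ≤ adaptedNorm A β x := by
  have hβ : 0 < β := hρ.trans_lt hρβ
  simpa [adaptedNorm] using (summable_adaptedNorm hAk hρ hρβ x).le_tsum 0 fun k _ => by positivity

theorem adaptedNorm_le (x : E) : adaptedNorm A β x ≤ c / (1 - ρ / β) * ‖x‖ := by
  have hβ : 0 < β := hρ.trans_lt hρβ
  have hq : ρ / β < 1 := (div_lt_one hβ).2 hρβ
  calc adaptedNorm A β x ≤ ∑' k : ℕ, c * ‖x‖ * (ρ / β) ^ k :=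
        (summable_adaptedNorm hAk hρ hρβ x).tsum_le_tsum (norm_pow_apply_div_le hAk hρ hρβ x)
          ((summable_geometric_of_lt_one (by positivity) hq).mul_left _)
    _ = c / (1 - ρ / β) * ‖x‖ := by
        rw [tsum_mul_left, tsum_geometric_of_lt_one (by positivity) hq]
        ring

theorem adaptedNorm_add_le (x y : E) :
    adaptedNorm A β (x + y) ≤ adaptedNorm A β x + adaptedNorm A β y := by
  have hβ : 0 < β := hρ.trans_lt hρβ
  have hs := summable_adaptedNorm hAk hρ hρβ
  rw [adaptedNorm, adaptedNorm, adaptedNorm, ← (hs x).tsum_add (hs y)]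
  refine (hs (x + y)).tsum_le_tsum (fun k => ?_) ((hs x).add (hs y))
  rw [← add_div, map_add]
  gcongr
  exact norm_add_le _ _

theorem adaptedNorm_apply_le (x : E) : adaptedNorm A β (A x) ≤ β * adaptedNorm A β x := by
  have hβ : 0 < β := hρ.trans_lt hρβ
  have hs := summable_adaptedNorm hAk hρ hρβ x
  have hshift (k : ℕ) : ‖(A ^ k) (A x)‖ / β ^ k = β * (‖(A ^ (k + 1)) x‖ / β ^ (k + 1)) := by
    rw [pow_succ, mul_apply_eq_comp, pow_succ β]
    field_simp
  -- dropping the `k = 0` term of `adaptedNorm A β x` leaves `adaptedNorm A β (A x) / β`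
  have htail := hs.tsum_eq_zero_add
  calc adaptedNorm A β (A x) = β * ∑' k : ℕ, ‖(A ^ (k + 1)) x‖ / β ^ (k + 1) := by
        rw [adaptedNorm, tsum_congr hshift, tsum_mul_left]
    _ ≤ β * adaptedNorm A β x := by
        gcongr
        rw [adaptedNorm, htail]
        exact le_add_of_nonneg_left (by positivity)

theorem adaptedNorm_le_of_norm_sub_apply_le {y z : E} {ε : ℝ} (hε : 0 ≤ ε)
    (hz : ‖z - A y‖ ≤ ε * ‖y‖) :
    adaptedNorm A β z ≤ (β + c / (1 - ρ / β) * ε) * adaptedNorm A β y := by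
  have hβ : 0 < β := hρ.trans_lt hρβ
  have hc : 0 ≤ c := (norm_nonneg _).trans (by simpa using hAk 0)
  have hM : 0 ≤ c / (1 - ρ / β) := div_nonneg hc (by linarith [(div_lt_one hβ).2 hρβ])
  calc adaptedNorm A β z ≤ adaptedNorm A β (A y) + adaptedNorm A β (z - A y) := by
        simpa using adaptedNorm_add_le hAk hρ hρβ (A y) (z - A y)
    _ ≤ β * adaptedNorm A β y + c / (1 - ρ / β) * (ε * adaptedNorm A β y) := by
        gcongr
        · exact adaptedNorm_apply_le hAk hρ hρβ y
        · refine (adaptedNorm_le hAk hρ hρβ _).trans ?_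
          gcongr
          exact hz.trans (by gcongr; exact norm_le_adaptedNorm hAk hρ hρβ y)
    _ = (β + c / (1 - ρ / β) * ε) * adaptedNorm A β y := by ring

end

end ContinuousLinearMap

theorem Function.apply_iterate_le_pow_mul {X : Type*} {V : X → ℝ} {g : X → X} {α r : ℝ}
    (hα0 : 0 ≤ α) (hα1 : α ≤ 1) (hg : ∀ y, V y < r → V (g y) ≤ α * V y)
    {x : X} (hx0 : 0 ≤ V x) (hxr : V x < r) (k : ℕ) : V (g^[k] x) ≤ α ^ k * V x := by
  induction k with
  | zero => simp
  | succ k ih =>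
    have hlt : V (g^[k] x) < r :=
      ih.trans_lt ((mul_le_of_le_one_left hx0 (pow_le_one₀ hα0 hα1)).trans_lt hxr)
    rw [Function.iterate_succ_apply', pow_succ', mul_assoc]
    exact (hg _ hlt).trans (mul_le_mul_of_nonneg_left ih hα0)

theorem HasFDerivAt.exists_norm_iterate_le {E : Type*} [NormedAddCommGroup E] [NormedSpace ℝ E]
    {f : E → E} {A : E →L[ℝ] E} (hA : HasFDerivAt f A 0) (hf0 : f 0 = 0) {c ρ : ℝ}
    (hc : 1 ≤ c) (hρ0 : 0 ≤ ρ) (hρ1 : ρ < 1) (hAk : ∀ k : ℕ, ‖A ^ k‖ ≤ c * ρ ^ k) :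
    ∃ δ > 0, ∃ C ≥ (1 : ℝ), ∃ α ∈ Set.Ioo (0 : ℝ) 1,
      ∀ x : E, ‖x‖ < δ → ∀ k : ℕ, ‖f^[k] x‖ ≤ C * α ^ k * ‖x‖ := by
  obtain ⟨β, hρβ, hβ1⟩ := exists_between hρ1
  obtain ⟨α, hβα, hα1⟩ := exists_between hβ1
  have hβ0 : 0 < β := hρ0.trans_lt hρβ
  set M := c / (1 - ρ / β)
  have hM1 : 1 ≤ M :=
    (one_le_div (by linarith [(div_lt_one hβ0).2 hρβ])).2 (by linarith [div_nonneg hρ0 hβ0.le])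
  set ε := (α - β) / M
  have hMε : M * ε = α - β := mul_div_cancel₀ _ (by positivity)
  set N := A.adaptedNorm β
  have hN_le := ContinuousLinearMap.adaptedNorm_le hAk hρ0 hρβ
  have hnorm_le := ContinuousLinearMap.norm_le_adaptedNorm hAk hρ0 hρβ
  have hε : 0 < ε := div_pos (by linarith) (by positivity)
  obtain ⟨r, hr, hfA⟩ := Metric.eventually_nhds_iff.1 <|
    (Asymptotics.isLittleO_iff.1 hA.isLittleO) hε
  have hstep (y : E) (hy : N y < r) : N (f y) ≤ α * N y := by
    have hfy : ‖f y - A y‖ ≤ ε * ‖y‖ := by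
      simpa [hf0] using hfA (y := y) (by simpa using (hnorm_le y).trans_lt hy)
    refine (ContinuousLinearMap.adaptedNorm_le_of_norm_sub_apply_le hAk hρ0 hρβ
      hε.le hfy).trans_eq ?_
    rw [show c / (1 - ρ / β) * ε = α - β from hMε, add_sub_cancel]
  have hα0 : 0 < α := hβ0.trans hβα
  refine ⟨r / M, by positivity, M, hM1, α, ⟨hα0, hα1⟩, fun x hx k => ?_⟩
  have hxr : N x < r := (hN_le x).trans_lt (by rwa [lt_div_iff₀' (by positivity)] at hx)
  calc ‖f^[k] x‖ ≤ α ^ k * N x :=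
        (hnorm_le _).trans <| Function.apply_iterate_le_pow_mul hα0.le hα1.le hstep
          (ContinuousLinearMap.adaptedNorm_nonneg hβ0.le x) hxr k
    _ ≤ α ^ k * (M * ‖x‖) := by gcongr; exact hN_le x
    _ = M * α ^ k * ‖x‖ := by ring

theorem stmt_2_general (n : ℕ)
    (Ω : Set (EuclideanSpace ℝ (Fin n))) (hΩ : IsOpen Ω)
    (h0Ω : (0 : EuclideanSpace ℝ (Fin n)) ∈ Ω)
    (f : EuclideanSpace ℝ (Fin n) → EuclideanSpace ℝ (Fin n))
    (hf0 : f 0 = 0)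
    (A : EuclideanSpace ℝ (Fin n) →L[ℝ] EuclideanSpace ℝ (Fin n))
    (hA : HasFDerivAt f A 0)
    (c ρ : ℝ) (hc : 1 ≤ c) (hρ : ρ ∈ Set.Ioo (0 : ℝ) 1)
    (hAk : ∀ k : ℕ, ‖A ^ k‖ ≤ c * ρ ^ k) :
    ∃ δ > 0, ∃ C ≥ (1 : ℝ), ∃ α ∈ Set.Ioo (0 : ℝ) 1,
      ∀ x : EuclideanSpace ℝ (Fin n), ‖x‖ < δ →
        ∀ k : ℕ, f^[k] x ∈ Ω ∧ ‖f^[k] x‖ ≤ C * α ^ k * ‖x‖ := by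
  obtain ⟨δ, hδ, C, hC, α, hα, hdecay⟩ := hA.exists_norm_iterate_le hf0 hc hρ.1.le hρ.2 hAk
  obtain ⟨r, hr, hball⟩ := Metric.isOpen_iff.1 hΩ 0 h0Ω
  refine ⟨min δ (r / C), by positivity, C, hC, α, hα, fun x hx k => ⟨hball ?_, ?_⟩⟩
  · rw [mem_ball_zero_iff]
    calc ‖f^[k] x‖ ≤ C * α ^ k * ‖x‖ := hdecay x (hx.trans_le (min_le_left _ _)) k
      _ ≤ C * 1 * ‖x‖ := by gcongr; exact pow_le_one₀ hα.1.le hα.2.le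
      _ < r := by
        rw [mul_one, ← lt_div_iff₀' (by positivity)]
        exact hx.trans_le (min_le_right _ _)
  · exact hdecay x (hx.trans_le (min_le_left _ _)) k

/-- `0` is locally exponentially attracting. -/
theorem stmt_2 (n : ℕ) (hn : 1 ≤ n)
    (Ω : Set (EuclideanSpace ℝ (Fin n))) (hΩ : IsOpen Ω)
    (h0Ω : (0 : EuclideanSpace ℝ (Fin n)) ∈ Ω)
    (f : EuclideanSpace ℝ (Fin n) → EuclideanSpace ℝ (Fin n))
    (hf : AnalyticOn ℝ f Ω) (hmaps : Set.MapsTo f Ω Ω) (hf0 : f 0 = 0)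
    (A : EuclideanSpace ℝ (Fin n) →L[ℝ] EuclideanSpace ℝ (Fin n))
    (hA : HasFDerivAt f A 0)
    (c ρ : ℝ) (hc : 1 ≤ c) (hρ : ρ ∈ Set.Ioo (0 : ℝ) 1)
    (hAk : ∀ k : ℕ, ‖A ^ k‖ ≤ c * ρ ^ k) :
    ∃ δ > 0, ∃ C ≥ (1 : ℝ), ∃ α ∈ Set.Ioo (0 : ℝ) 1,
      ∀ x : EuclideanSpace ℝ (Fin n), ‖x‖ < δ →
        ∀ k : ℕ, f^[k] x ∈ Ω ∧ ‖f^[k] x‖ ≤ C * α ^ k * ‖x‖ :=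
  stmt_2_general n Ω hΩ h0Ω f hf0 A hA c ρ hc hρ hAk
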